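/- One step of de Casteljau subdivision at parameter 1/2 reproduces the same Bézier curve: if P_i^0 = P_i and P_i^{k+1} = (P_i^k + P_{i+1}^k)/2, then the Bézier curve with control points (P_0^0, P_0^1, …, P_0^n) restricted to [0,1] equals the original Bézier curve restricted to [0, 1/2] after reparametrization t ↦ t/2. -/

import Mathlib

/-- The Bézier curve of degree `n` with control points `Q : ℕ → ℝ³`
(only `Q 0, …, Q n` are used). -/
noncomputable def bezier (n : ℕ) (Q : ℕ → EuclideanSpace ℝ (Fin 3)) (t : ℝ) :
    EuclideanSpace ℝ (Fin 3) :=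
  ∑ i ∈ Finset.range (n + 1), ((n.choose i : ℝ) * t ^ i * (1 - t) ^ (n - i)) • Q i

/-! Writing `S` for the shift of sequences, `Σ C(n,k) sᵏ (1-s)ⁿ⁻ᵏ Q k` is the `0`-th term of
`((1-s) + s S)ⁿ Q`, and the de Casteljau points are `Pᵏ = ((1 + S)/2)ᵏ P`. Hence the subdivided
curve at `t` is the `0`-th term of `((1-t) + t (1 + S)/2)ⁿ P = ((1 - t/2) + (t/2) S)ⁿ P`, which is
the original curve at `t/2`. -/

open Finset

section

variable {R M : Type*} [CommRing R] [AddCommGroup M] [Module R M]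

theorem Module.End.one_sub_smul_add_smul_pow_apply (T : Module.End R M) (s : R) (n : ℕ) (v : M) :
    (((1 - s) • 1 + s • T) ^ n) v =
      ∑ k ∈ range (n + 1), ((n.choose k : R) * s ^ k * (1 - s) ^ (n - k)) • (T ^ k) v := by
  have hcomm : Commute (s • T) ((1 - s) • (1 : Module.End R M)) :=
    ((Commute.one_right T).smul_left s).smul_right (1 - s)
  rw [add_comm, hcomm.add_pow, LinearMap.sum_apply]
  refine Finset.sum_congr rfl fun k _ => ?_
  simp only [smul_pow, one_pow, Module.End.mul_apply, LinearMap.smul_apply, Module.End.one_apply,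
    Module.End.natCast_apply, map_smul, ← Nat.cast_smul_eq_nsmul R, smul_smul]
  ring_nf

variable (R M) in
def seqShift : Module.End R (ℕ → M) := LinearMap.funLeft R M Nat.succ

@[simp]
theorem seqShift_apply (Q : ℕ → M) (i : ℕ) : seqShift R M Q i = Q (i + 1) := rfl

theorem seqShift_pow_apply (k : ℕ) (Q : ℕ → M) (i : ℕ) : (seqShift R M ^ k) Q i = Q (i + k) := by
  induction k generalizing i with
  | zero => rfl
  | succ k ih => rw [pow_succ', Module.End.mul_apply, seqShift_apply, ih, add_assoc, add_comm 1]

theorem eq_smul_one_add_seqShift_pow_apply (c : R) (P : ℕ → M) (D : ℕ → ℕ → M)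
    (hD0 : ∀ i, D 0 i = P i) (hDs : ∀ k i, D (k + 1) i = c • (D k i + D k (i + 1))) (k : ℕ) :
    D k = ((c • (1 + seqShift R M)) ^ k) P := by
  induction k with
  | zero => exact funext hD0
  | succ k ih =>
    funext i
    rw [hDs, pow_succ', Module.End.mul_apply, ← ih]
    rfl

end

theorem bezier_eq_pow_apply_zero (T : Module.End ℝ (ℕ → EuclideanSpace ℝ (Fin 3)))
    (Q : ℕ → EuclideanSpace ℝ (Fin 3)) (n : ℕ) (s : ℝ) :
    bezier n (fun k => (T ^ k) Q 0) s = (((1 - s) • 1 + s • T) ^ n) Q 0 := by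
  rw [Module.End.one_sub_smul_add_smul_pow_apply, Finset.sum_apply]
  rfl

theorem bezier_eq_seqShift_pow_apply_zero (Q : ℕ → EuclideanSpace ℝ (Fin 3)) (n : ℕ) (s : ℝ) :
    bezier n Q s = (((1 - s) • 1 + s • seqShift ℝ (EuclideanSpace ℝ (Fin 3))) ^ n) Q 0 := by
  simp only [← bezier_eq_pow_apply_zero, seqShift_pow_apply, zero_add]

/-- One step of de Casteljau subdivision at parameter 1/2: the Bézier curve on the
control points `P⁰₀, P¹₀, …, Pⁿ₀` equals the original Bézier curve reparametrized by
`t ↦ t/2`.  Here `D k i = Pᵏᵢ` with `D 0 i = P i` and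
`D (k+1) i = (D k i + D k (i+1))/2`. -/
theorem deCasteljau_subdivision_half (n : ℕ) (P : ℕ → EuclideanSpace ℝ (Fin 3))
    (D : ℕ → ℕ → EuclideanSpace ℝ (Fin 3))
    (hD0 : ∀ i, D 0 i = P i)
    (hDs : ∀ k i, D (k + 1) i = ((2:ℝ)⁻¹) • (D k i + D k (i + 1))) :
    ∀ t ∈ Set.Icc (0:ℝ) 1,
      bezier n (fun i => D i 0) t = bezier n P (t / 2) := by
  intro t _
  have hshift : (1 - t) • 1 + t • ((2:ℝ)⁻¹ • (1 + seqShift ℝ _)) =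
      (1 - t / 2) • 1 + (t / 2) • seqShift ℝ (EuclideanSpace ℝ (Fin 3)) := by
    module
  simp only [eq_smul_one_add_seqShift_pow_apply _ P D hD0 hDs]
  rw [bezier_eq_pow_apply_zero, hshift, bezier_eq_seqShift_pow_apply_zero]
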